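/- arXiv:2205.13825 — 3 statements merged into one kernel-verified Lean document; each statement's English description precedes it below -/
import Mathlib

section
/- A matrix M = M(a₁,a₂,a₃,u,v,w) in U₄(ℤ/3) has order 9 if and only if a₁a₂a₃ ≠ 0 in ℤ/3; otherwise M has order dividing 3. -/
/-- The upper unitriangular 4×4 matrix `M(a₁,a₂,a₃,u,v,w)` over `ℤ/3`. -/
def M4 (a₁ a₂ a₃ u v w : ZMod 3) : Matrix (Fin 4) (Fin 4) (ZMod 3) :=
  !![1, a₁, u, v; 0, 1, a₂, w; 0, 0, 1, a₃; 0, 0, 0, 1]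

lemma M4_cube (a₁ a₂ a₃ u v w : ZMod 3) :
    (M4 a₁ a₂ a₃ u v w) ^ 3 = M4 0 0 0 0 (a₁ * a₂ * a₃) 0 := by
  rw [pow_succ, pow_succ, pow_one]
  ext i j
  fin_cases i <;> fin_cases j <;>
    simp [M4, Matrix.mul_apply, Fin.sum_univ_succ, Matrix.vecHead, Matrix.vecTail] <;>
    ring_nf <;> simp [show (3 : ZMod 3) = 0 from by decide]

lemma M4_zero : M4 0 0 0 0 0 0 = 1 := by
  ext i j
  fin_cases i <;> fin_cases j <;>
    simp [M4, Matrix.one_apply, Matrix.vecHead, Matrix.vecTail]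

lemma M4_eq_one_iff (c : ZMod 3) : M4 0 0 0 0 c 0 = 1 ↔ c = 0 := by
  constructor
  · intro h
    have := congrFun (congrFun h 0) 3
    simpa [M4, Matrix.one_apply] using this
  · rintro rfl; exact M4_zero

/-- `M(a₁,a₂,a₃,u,v,w) ∈ U₄(ℤ/3)` has order 9 iff `a₁a₂a₃ ≠ 0`;
otherwise its order divides 3. -/
theorem orderOf_M4_ZMod3 (a₁ a₂ a₃ u v w : ZMod 3) :
    (orderOf (M4 a₁ a₂ a₃ u v w) = 9 ↔ a₁ * a₂ * a₃ ≠ 0) ∧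
      (a₁ * a₂ * a₃ = 0 → orderOf (M4 a₁ a₂ a₃ u v w) ∣ 3) := by
  set M := M4 a₁ a₂ a₃ u v w with hM
  have hdiv3 : a₁ * a₂ * a₃ = 0 → orderOf M ∣ 3 := by
    intro h
    apply orderOf_dvd_of_pow_eq_one
    rw [hM, M4_cube, h, M4_zero]
  refine ⟨⟨?_, ?_⟩, hdiv3⟩
  · intro h9 h0
    have := hdiv3 h0
    rw [h9] at this
    norm_num at this
  · intro h0
    have h9 : M ^ 9 = 1 := by
      rw [show (9:ℕ) = 3 * 3 from rfl, pow_mul, hM, M4_cube, M4_cube]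
      simpa using M4_zero
    have hd : orderOf M ∣ 9 := orderOf_dvd_of_pow_eq_one h9
    have h3 : ¬ orderOf M ∣ 3 := by
      intro h
      have : M ^ 3 = 1 := orderOf_dvd_iff_pow_eq_one.mp h
      rw [hM, M4_cube, M4_eq_one_iff] at this
      exact h0 this
    obtain ⟨k, hk, he⟩ := (Nat.dvd_prime_pow Nat.prime_three).mp
      (show orderOf M ∣ 3 ^ 2 from by norm_num; exact hd)
    interval_cases k
    · rw [he] at h3 ⊢; exact absurd (by norm_num) h3
    · rw [he] at h3 ⊢; exact absurd (by norm_num) h3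
    · rw [he]; norm_num
end

section
/- Let H be the subgroup of U₄(ℤ/3) of matrices N(a,u,v,w) (rows (1,a,u,v),(0,1,a,w),(0,0,1,a),(0,0,0,1)). An element N(a,u,v,w) of H has order 9 if and only if a ≠ 0; equivalently, the elements of order dividing 3 in H are precisely those with a = 0. -/
/-- The matrix `N(a,u,v,w)` over `ℤ/3`, with rows
`(1,a,u,v)`, `(0,1,a,w)`, `(0,0,1,a)`, `(0,0,0,1)`; these matrices form the
subgroup `H` of `U₄(ℤ/3)`. -/
def N4 (a u v w : ZMod 3) : Matrix (Fin 4) (Fin 4) (ZMod 3) :=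
  !![1, a, u, v; 0, 1, a, w; 0, 0, 1, a; 0, 0, 0, 1]

lemma N4_pow3 (a u v w : ZMod 3) : (N4 a u v w) ^ 3 = N4 0 0 a 0 := by
  revert a u v w; decide

lemma N4_zero : N4 0 0 0 0 = 1 := by
  decide

lemma N4_pow3_eq_one_iff (a u v w : ZMod 3) :
    (N4 a u v w) ^ 3 = 1 ↔ a = 0 := by
  rw [N4_pow3]
  constructor
  · intro h
    have := congrArg (fun M => M 0 3) h
    simpa [N4, Matrix.one_apply] using this
  · rintro rfl; exact N4_zero

lemma N4_pow9 (a u v w : ZMod 3) : (N4 a u v w) ^ 9 = 1 := by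
  rw [show (9 : ℕ) = 3 * 3 from rfl, pow_mul, N4_pow3, N4_pow3]
  simpa using N4_zero

/-- an element `N(a,u,v,w)` of `H` has order 9 iff `a ≠ 0`;
equivalently, the elements of order dividing 3 in `H` are precisely those with
`a = 0`. -/
theorem orderOf_N4 (a u v w : ZMod 3) :
    (orderOf (N4 a u v w) = 9 ↔ a ≠ 0) ∧
      (orderOf (N4 a u v w) ∣ 3 ↔ a = 0) := by
  have h3 : orderOf (N4 a u v w) ∣ 3 ↔ a = 0 := by
    rw [orderOf_dvd_iff_pow_eq_one, N4_pow3_eq_one_iff]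
  refine ⟨⟨fun h9 ha => ?_, fun ha => ?_⟩, h3⟩
  · have := h3.mpr ha
    rw [h9] at this
    norm_num at this
  · have h9 : orderOf (N4 a u v w) ∣ 9 :=
      orderOf_dvd_of_pow_eq_one (N4_pow9 a u v w)
    have h9' : orderOf (N4 a u v w) ∣ 3 ^ 2 := by norm_num at h9 ⊢; exact h9
    rcases (Nat.dvd_prime_pow Nat.prime_three).mp h9' with ⟨k, hk, he⟩
    interval_cases k
    · exfalso; exact ha (h3.mp (by rw [he]; norm_num))
    · exfalso; exact ha (h3.mp (by rw [he]; norm_num))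
    · rw [he]; norm_num
end

section
/- Let ℓ ≥ 3 be prime, let V = (ℤ/ℓ)² with basis {m̄₁, m̄₂}, and let A = [[1,1],[0,1]] act on V. Let G = V ⋊ ⟨Φ⟩ where Φ has order ℓ and acts via A. Then for any two characters χ₁, χ₂: G → ℤ/ℓ, there is a map κ: G → ℤ/ℓ such that g ↦ [[1, χ₁(g), κ(g)],[0,1,χ₂(g)],[0,0,1]] is a group homomorphism G → U₃(ℤ/ℓ). (Equivalently, the cup product χ₁ ∪ χ₂ vanishes in H²(G, ℤ/ℓ).) -/
/-- The upper unitriangular 3×3 matrix over `ℤ/ℓ` with rows `(1,a,c)`, `(0,1,b)`,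
`(0,0,1)`. -/
def M3 {ℓ : ℕ} (a b c : ZMod ℓ) : Matrix (Fin 3) (Fin 3) (ZMod ℓ) :=
  !![1, a, c; 0, 1, b; 0, 0, 1]

section Aux

lemma M3_mul {ℓ : ℕ} (a b c a' b' c' : ZMod ℓ) :
    M3 a b c * M3 a' b' c' = M3 (a + a') (b + b') (c + c' + a * b') := by
  ext i j
  fin_cases i <;> fin_cases j <;>
    simp [M3, Matrix.mul_apply, Fin.sum_univ_three, Matrix.vecHead, Matrix.vecTail] <;>
    ring

variable {G : Type*} [Group G]

lemma normal_form_mul (m₁ m₂ Φ : G)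
    (h12 : Commute m₁ m₂) (h1Φ : Commute m₁ Φ)
    (hc2 : Φ * m₂ = m₁ * m₂ * Φ) (A B C A' B' C' : ℕ) :
    (m₁ ^ A * m₂ ^ B * Φ ^ C) * (m₁ ^ A' * m₂ ^ B' * Φ ^ C') =
      m₁ ^ (A + A' + C * B') * m₂ ^ (B + B') * Φ ^ (C + C') := by
  have step : ∀ n : ℕ, Φ ^ n * m₂ = m₁ ^ n * m₂ * Φ ^ n := by
    intro n
    induction n with
    | zero => simp
    | succ n ih =>
        calc Φ ^ (n + 1) * m₂ = Φ ^ n * (Φ * m₂) := by rw [pow_succ, mul_assoc]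
          _ = Φ ^ n * (m₁ * m₂ * Φ) := by rw [hc2]
          _ = (Φ ^ n * m₁) * m₂ * Φ := by simp [mul_assoc]
          _ = (m₁ * Φ ^ n) * m₂ * Φ := by rw [(h1Φ.pow_right n).eq]
          _ = m₁ * (Φ ^ n * m₂) * Φ := by simp [mul_assoc]
          _ = m₁ * (m₁ ^ n * m₂ * Φ ^ n) * Φ := by rw [ih]
          _ = (m₁ * m₁ ^ n) * m₂ * (Φ ^ n * Φ) := by simp [mul_assoc]
          _ = m₁ ^ (n + 1) * m₂ * Φ ^ (n + 1) := by rw [← pow_succ', ← pow_succ]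
  have key : ∀ (n k : ℕ) (x : G),
      Φ ^ n * (m₂ ^ k * x) = m₁ ^ (n * k) * (m₂ ^ k * (Φ ^ n * x)) := by
    intro n k
    induction k with
    | zero => intro x; simp
    | succ k ih =>
        intro x
        calc Φ ^ n * (m₂ ^ (k + 1) * x) = Φ ^ n * (m₂ ^ k * (m₂ * x)) := by
              simp [pow_succ, mul_assoc]
          _ = m₁ ^ (n * k) * (m₂ ^ k * (Φ ^ n * (m₂ * x))) := ih _
          _ = m₁ ^ (n * k) * (m₂ ^ k * ((Φ ^ n * m₂) * x)) := by simp [mul_assoc]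
          _ = m₁ ^ (n * k) * (m₂ ^ k * ((m₁ ^ n * m₂ * Φ ^ n) * x)) := by rw [step]
          _ = m₁ ^ (n * k) * ((m₂ ^ k * m₁ ^ n) * (m₂ * (Φ ^ n * x))) := by
              simp [mul_assoc]
          _ = m₁ ^ (n * k) * ((m₁ ^ n * m₂ ^ k) * (m₂ * (Φ ^ n * x))) := by
              rw [(h12.symm.pow_pow k n).eq]
          _ = m₁ ^ (n * (k + 1)) * (m₂ ^ (k + 1) * (Φ ^ n * x)) := by
              rw [Nat.mul_succ, pow_add, pow_succ]
              simp [mul_assoc]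
  have swap1 : ∀ (n k : ℕ) (x : G), Φ ^ n * (m₁ ^ k * x) = m₁ ^ k * (Φ ^ n * x) := by
    intro n k x
    rw [← mul_assoc, (h1Φ.symm.pow_pow n k).eq, mul_assoc]
  have swap2 : ∀ (n k : ℕ) (x : G), m₂ ^ n * (m₁ ^ k * x) = m₁ ^ k * (m₂ ^ n * x) := by
    intro n k x
    rw [← mul_assoc, (h12.symm.pow_pow n k).eq, mul_assoc]
  calc (m₁ ^ A * m₂ ^ B * Φ ^ C) * (m₁ ^ A' * m₂ ^ B' * Φ ^ C')
      = m₁ ^ A * (m₂ ^ B * (Φ ^ C * (m₁ ^ A' * (m₂ ^ B' * Φ ^ C')))) := by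
        simp [mul_assoc]
    _ = m₁ ^ A * (m₂ ^ B * (m₁ ^ A' * (Φ ^ C * (m₂ ^ B' * Φ ^ C')))) := by
        rw [swap1]
    _ = m₁ ^ A * (m₂ ^ B * (m₁ ^ A' * (m₁ ^ (C * B') * (m₂ ^ B' * (Φ ^ C * Φ ^ C'))))) := by
        rw [key]
    _ = m₁ ^ A * (m₁ ^ A' * (m₁ ^ (C * B') * (m₂ ^ B * (m₂ ^ B' * (Φ ^ C * Φ ^ C'))))) := by
        rw [swap2 B A', swap2 B (C * B')]
    _ = m₁ ^ (A + A' + C * B') * m₂ ^ (B + B') * Φ ^ (C + C') := by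
        simp [pow_add, mul_assoc]

end Aux

/-- let `ℓ ≥ 3` be prime and let `G = V ⋊ ⟨Φ⟩` where `V = (ℤ/ℓ)²` with
basis `{m₁, m₂}` and `Φ`, of order `ℓ`, acts via the unipotent matrix `[[1,1],[0,1]]`
(so `Φm₁Φ⁻¹ = m₁` and `Φm₂Φ⁻¹ = m₁m₂`); `G` is presented abstractly by generators
`m₁, m₂, Φ` with these relations and `#G = ℓ³`.  Then for any two characters
`χ₁, χ₂ : G → ℤ/ℓ` there is a map `κ : G → ℤ/ℓ` such that
`g ↦ [[1, χ₁(g), κ(g)],[0,1,χ₂(g)],[0,0,1]]` is a group homomorphism `G → U₃(ℤ/ℓ)`,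
i.e. the cup product `χ₁ ∪ χ₂` vanishes. -/
theorem exists_unipotent_lift_of_semidirect (ℓ : ℕ) (hℓ : ℓ.Prime) (h3 : 3 ≤ ℓ)
    (G : Type*) [Group G] (m₁ m₂ Φ : G)
    (hcomm : m₁ * m₂ = m₂ * m₁)
    (hm₁ : orderOf m₁ = ℓ) (hm₂ : orderOf m₂ = ℓ) (hΦ : orderOf Φ = ℓ)
    (hc₁ : Φ * m₁ * Φ⁻¹ = m₁) (hc₂ : Φ * m₂ * Φ⁻¹ = m₁ * m₂)
    (hgen : Subgroup.closure {m₁, m₂, Φ} = (⊤ : Subgroup G))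
    (hcard : Nat.card G = ℓ ^ 3)
    (χ₁ χ₂ : G →* Multiplicative (ZMod ℓ)) :
    ∃ κ : G → ZMod ℓ, ∀ g₁ g₂ : G,
      M3 (Multiplicative.toAdd (χ₁ (g₁ * g₂))) (Multiplicative.toAdd (χ₂ (g₁ * g₂)))
          (κ (g₁ * g₂)) =
        M3 (Multiplicative.toAdd (χ₁ g₁)) (Multiplicative.toAdd (χ₂ g₁)) (κ g₁) *
          M3 (Multiplicative.toAdd (χ₁ g₂)) (Multiplicative.toAdd (χ₂ g₂)) (κ g₂) := by
  haveI : Fact ℓ.Prime := ⟨hℓ⟩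
  haveI : NeZero ℓ := ⟨hℓ.pos.ne'⟩
  -- basic commutation facts
  have h1Φ : Commute m₁ Φ := by
    have h := hc₁
    rw [mul_inv_eq_iff_eq_mul] at h
    exact h.symm
  have h12 : Commute m₁ m₂ := hcomm
  have hc2' : Φ * m₂ = m₁ * m₂ * Φ := by
    rw [mul_inv_eq_iff_eq_mul] at hc₂; exact hc₂
  -- χ vanishes on m₁
  have hχm₁ : ∀ χ : G →* Multiplicative (ZMod ℓ), Multiplicative.toAdd (χ m₁) = 0 := by
    intro χ
    have hm : Φ * m₂ * Φ⁻¹ * m₂⁻¹ = m₁ := by rw [hc₂]; group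
    rw [← hm]
    simp only [map_mul, map_inv, toAdd_mul, toAdd_inv]
    ring
  -- cast helper
  have hval : ∀ x : ZMod ℓ, ((x.val : ℕ) : ZMod ℓ) = x := fun x =>
    ZMod.natCast_rightInverse x
  -- power normalization
  have hpow : ∀ (g : G), orderOf g = ℓ → ∀ (n : ℕ) (x : ZMod ℓ),
      ((n : ZMod ℓ) = x) → g ^ n = g ^ x.val := by
    intro g hg n x h
    rw [pow_eq_pow_iff_modEq, hg, ← ZMod.natCast_eq_natCast_iff, h, hval]
  -- the normal form map
  set F : ZMod ℓ × ZMod ℓ × ZMod ℓ → G :=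
    fun v => m₁ ^ v.1.val * m₂ ^ v.2.1.val * Φ ^ v.2.2.val with hF
  have FMul : ∀ v w : ZMod ℓ × ZMod ℓ × ZMod ℓ,
      F v * F w = F (v.1 + w.1 + v.2.2 * w.2.1, v.2.1 + w.2.1, v.2.2 + w.2.2) := by
    intro v w
    rw [hF]
    dsimp only
    rw [normal_form_mul m₁ m₂ Φ h12 h1Φ hc2' _ _ _ _ _ _]
    congr 1
    · congr 1
      · exact hpow m₁ hm₁ _ _ (by push_cast [hval]; ring)
      · exact hpow m₂ hm₂ _ _ (by push_cast [hval]; ring)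
    · exact hpow Φ hΦ _ _ (by push_cast [hval]; ring)
  have Fone : F (0, 0, 0) = 1 := by simp [hF, ZMod.val_zero]
  -- range of F is a subgroup
  let S : Subgroup G :=
    { carrier := Set.range F
      one_mem' := ⟨(0, 0, 0), Fone⟩
      mul_mem' := by
        rintro x y ⟨v, rfl⟩ ⟨w, rfl⟩
        exact ⟨_, (FMul v w).symm⟩
      inv_mem' := by
        rintro x ⟨v, rfl⟩
        refine ⟨(-v.1 + v.2.2 * v.2.1, -v.2.1, -v.2.2), ?_⟩
        have h := FMul v (-v.1 + v.2.2 * v.2.1, -v.2.1, -v.2.2)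
        have h0 : F v * F (-v.1 + v.2.2 * v.2.1, -v.2.1, -v.2.2) = 1 := by
          rw [h, ← Fone]
          congr 1
          simp only [Prod.mk.injEq]
          refine ⟨by ring, by ring, by ring⟩
        exact (inv_eq_of_mul_eq_one_right h0).symm }
  have hsurj : Function.Surjective F := by
    intro g
    have hg : g ∈ S := by
      have : Subgroup.closure {m₁, m₂, Φ} ≤ S := by
        rw [Subgroup.closure_le]
        intro x hx
        rcases hx with rfl | rfl | rfl
        · exact ⟨(1, 0, 0), by simp [hF, ZMod.val_zero, ZMod.val_one]⟩
        · exact ⟨(0, 1, 0), by simp [hF, ZMod.val_zero, ZMod.val_one]⟩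
        · exact ⟨(0, 0, 1), by simp [hF, ZMod.val_zero, ZMod.val_one]⟩
      exact this (hgen ▸ Subgroup.mem_top g)
    exact hg
  haveI : Finite G := Nat.finite_of_card_ne_zero (by
    rw [hcard]; exact pow_ne_zero _ hℓ.pos.ne')
  have hbij : Function.Bijective F :=
    (Nat.bijective_iff_surjective_and_card F).mpr
      ⟨hsurj, by simp only [Nat.card_prod, Nat.card_zmod, hcard]; ring⟩
  set E : (ZMod ℓ × ZMod ℓ × ZMod ℓ) ≃ G := Equiv.ofBijective F hbij with hE
  have hEF : ∀ v, E v = F v := fun v => rfl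
  have hcoord : ∀ g h : G,
      E.symm (g * h) = ((E.symm g).1 + (E.symm h).1 + (E.symm g).2.2 * (E.symm h).2.1,
        (E.symm g).2.1 + (E.symm h).2.1, (E.symm g).2.2 + (E.symm h).2.2) := by
    intro g h
    apply E.injective
    rw [E.apply_symm_apply, hEF, ← FMul, ← hEF, ← hEF, E.apply_symm_apply,
      E.apply_symm_apply]
  -- character values in coordinates
  have hχ : ∀ (χ : G →* Multiplicative (ZMod ℓ)) (g : G),
      Multiplicative.toAdd (χ g) =
        (E.symm g).2.1 * Multiplicative.toAdd (χ m₂) +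
          (E.symm g).2.2 * Multiplicative.toAdd (χ Φ) := by
    intro χ g
    conv_lhs => rw [← E.apply_symm_apply g, hEF, hF]
    simp only [map_mul, map_pow, toAdd_mul, toAdd_pow, nsmul_eq_mul, hχm₁ χ, hval,
      mul_zero, zero_add]
  set β₁ := Multiplicative.toAdd (χ₁ m₂) with hβ₁
  set γ₁ := Multiplicative.toAdd (χ₁ Φ) with hγ₁
  set β₂ := Multiplicative.toAdd (χ₂ m₂) with hβ₂
  set γ₂ := Multiplicative.toAdd (χ₂ Φ) with hγ₂
  set i2 : ZMod ℓ := (2 : ZMod ℓ)⁻¹ with hi2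
  have h2 : (2 : ZMod ℓ) * i2 = 1 := by
    apply mul_inv_cancel₀
    intro h
    have hdvd : ℓ ∣ 2 := by
      have h2' : ((2 : ℕ) : ZMod ℓ) = 0 := by exact_mod_cast h
      exact (ZMod.natCast_eq_zero_iff 2 ℓ).mp h2'
    have := Nat.le_of_dvd (by norm_num) hdvd
    omega
  set k : G → ZMod ℓ := fun g =>
    β₁ * β₂ * (E.symm g).2.1 * (E.symm g).2.1 * i2 +
      γ₁ * γ₂ * (E.symm g).2.2 * (E.symm g).2.2 * i2 +
      β₁ * γ₂ * ((E.symm g).2.1 * (E.symm g).2.2 - (E.symm g).1) +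
      γ₁ * β₂ * (E.symm g).1 with hkdef
  refine ⟨k, ?_⟩
  intro g₁ g₂
  rw [M3_mul]
  have e1 : Multiplicative.toAdd (χ₁ (g₁ * g₂)) =
      Multiplicative.toAdd (χ₁ g₁) + Multiplicative.toAdd (χ₁ g₂) := by
    rw [map_mul, toAdd_mul]
  have e2 : Multiplicative.toAdd (χ₂ (g₁ * g₂)) =
      Multiplicative.toAdd (χ₂ g₁) + Multiplicative.toAdd (χ₂ g₂) := by
    rw [map_mul, toAdd_mul]
  have hk : k (g₁ * g₂) = k g₁ + k g₂ +
      Multiplicative.toAdd (χ₁ g₁) * Multiplicative.toAdd (χ₂ g₂) := by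
    simp only [hkdef]
    rw [hcoord g₁ g₂, hχ χ₁ g₁, hχ χ₂ g₂]
    dsimp only
    linear_combination (β₁ * β₂ * (E.symm g₁).2.1 * (E.symm g₂).2.1 +
      γ₁ * γ₂ * (E.symm g₁).2.2 * (E.symm g₂).2.2) * h2
  rw [e1, e2, hk]
end
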